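/- arXiv:math/9509207 — 4 statements merged into one kernel-verified Lean document; each statement's English description precedes it below -/
import Mathlib

section
/- If G is a filter on Q(α) that is generic with respect to the dense sets D_β = {p : α(p) > β} for all β < α, and we set S_n = ⋃{p(n) : p ∈ G} (viewed as a function α → 2), then for all n and all γ < α: S_{n+1}(γ) = 1 implies S_n(δ) = 0 for all sufficiently large δ ∈ b_γ. -/
open Ordinal

/-- A condition in `Q(α)`: a sequence `p = ⟨p(n) : n ∈ ω⟩` where each `p(n)`
is a function from `α(p)` to `2` for some `α(p) < α`.  We represent `p(n)` as a
total function into `Bool` which is `false` off the domain (so conditions are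
canonical and extensionality holds). -/
structure QCond (α : Ordinal) where
  len : Ordinal
  len_lt : len < α
  f : ℕ → Ordinal → Bool
  f_off : ∀ n δ, len ≤ δ → f n δ = false

/-- The extension relation of `Q(α)`, relative to the partition `b` of the odd
ordinals below `α`: `p ≤ q` iff `α(p) ≥ α(q)`, each `p(n)` extends `q(n)`, and
whenever `q(n+1)(γ) = 1` and `δ ∈ b γ ∩ [α(q), α(p))` then `p(n)(δ) = 0`. -/
def QExt {α : Ordinal} (b : Ordinal → Set Ordinal) (p q : QCond α) : Prop :=
  q.len ≤ p.len ∧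
  (∀ n δ, δ < q.len → p.f n δ = q.f n δ) ∧
  (∀ n γ δ, γ < q.len → q.f (n+1) γ = true → δ ∈ b γ → q.len ≤ δ → δ < p.len →
    p.f n δ = false)

namespace QExt

variable {α : Ordinal} {b : Ordinal → Set Ordinal} {p q r : QCond α} {n : ℕ} {γ δ : Ordinal}

theorem f_eq_of_lt_len (h : QExt b r q) (hδ : δ < q.len) : r.f n δ = q.f n δ :=
  h.2.1 n δ hδ

theorem f_eq_false_of_mem_piece (h : QExt b r p) (hγ : γ < p.len) (hp : p.f (n + 1) γ = true)
    (hδ : δ ∈ b γ) (hpδ : p.len ≤ δ) : r.f n δ = false := by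
  rcases lt_or_ge δ r.len with hδr | hδr
  · exact h.2.2 n γ δ hγ hp hδ hpδ hδr
  · exact r.f_off n δ hδr

theorem f_eq_false_of_common_ext (hrp : QExt b r p) (hrq : QExt b r q) (hγ : γ < p.len)
    (hp : p.f (n + 1) γ = true) (hδ : δ ∈ b γ) (hpδ : p.len ≤ δ) : q.f n δ = false := by
  rcases lt_or_ge δ q.len with hδq | hδq
  · rw [← hrq.f_eq_of_lt_len hδq]
    exact hrp.f_eq_false_of_mem_piece hγ hp hδ hpδ
  · exact q.f_off n δ hδq

end QExt

theorem generic_union_coherence_general (α : Ordinal) (b : Ordinal → Set Ordinal)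
    (G : Set (QCond α))
    -- `G` is a filter: downward directed and upward closed
    (hdir : ∀ p ∈ G, ∀ q ∈ G, ∃ r ∈ G, QExt b r p ∧ QExt b r q)
    -- `S_n` is the union of the `p(n)` for `p ∈ G`
    (S : ℕ → Ordinal → Bool)
    (hS : ∀ n δ, S n δ = true ↔ ∃ p ∈ G, δ < p.len ∧ p.f n δ = true) :
    ∀ n, ∀ γ < α, S (n+1) γ = true →
      ∃ β < α, ∀ δ ∈ b γ, β ≤ δ → S n δ = false := by
  intro n γ _ hSγ
  obtain ⟨p, hpG, hγp, hpγ⟩ := (hS (n + 1) γ).1 hSγ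
  refine ⟨p.len, p.len_lt, fun δ hδ hpδ => ?_⟩
  rw [← Bool.not_eq_true, hS]
  rintro ⟨q, hqG, -, hqδ⟩
  obtain ⟨r, -, hrp, hrq⟩ := hdir p hpG q hqG
  simp [hrp.f_eq_false_of_common_ext hrq hγp hpγ hδ hpδ] at hqδ

/-- if `G` is a filter on `Q(α)` meeting each dense set
`D_β = {p : α(p) > β}` and `S_n = ⋃ {p(n) : p ∈ G}`, then for all `n` and
`γ < α`, `S_{n+1}(γ) = 1` implies `S_n(δ) = 0` for all sufficiently large
`δ ∈ b_γ`. -/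
theorem generic_union_coherence (α : Ordinal) (b : Ordinal → Set Ordinal)
    (hb : ∀ γ, b γ ⊆ Set.Iio α)   -- pieces of the partition live below α
    (G : Set (QCond α))
    -- `G` is a filter: downward directed and upward closed
    (hdir : ∀ p ∈ G, ∀ q ∈ G, ∃ r ∈ G, QExt b r p ∧ QExt b r q)
    (hup : ∀ p ∈ G, ∀ q, QExt b p q → q ∈ G)
    -- `G` meets every `D_β = {p : α(p) > β}`, `β < α`
    (hgen : ∀ β < α, ∃ p ∈ G, β < p.len)
    -- `S_n` is the union of the `p(n)` for `p ∈ G`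
    (S : ℕ → Ordinal → Bool)
    (hS : ∀ n δ, S n δ = true ↔ ∃ p ∈ G, δ < p.len ∧ p.f n δ = true) :
    ∀ n, ∀ γ < α, S (n+1) γ = true →
      ∃ β < α, ∀ δ ∈ b γ, β ≤ δ → S n δ = false :=
  generic_union_coherence_general α b G hdir S hS
end

section
/- Suppose (i_k)_{k≤n} and (j_k)_{k≤n} are strictly increasing (n+1)-tuples from a set A, where A has the 'one-step exchange' property: for any α < min of the tuple and any k, replacing the k-th coordinate j_k of a tuple by any element i_k of A with i_{k-1} < i_k < j_k preserves satisfaction of all formulas with parameters below α. Then the tuples ⟨i_0,…,i_n⟩ and ⟨j_0,…,j_n⟩ satisfy the same formulas with parameters below min(i_0, j_0). -/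
open Ordinal

/-! Pass from `j` to `i` one coordinate at a time, from the bottom up: step `m` replaces `j m`
by `i m`, which lies strictly between `i (m - 1)` and `j m`, so every step is a single exchange
and every intermediate tuple is still increasing. -/

section Hybrid

variable {α : Type*} {n : ℕ} (i j : Fin n → α)

def hybrid (m : ℕ) : Fin n → α := fun k => if (k : ℕ) < m then i k else j k

theorem hybrid_zero : hybrid i j 0 = j := by
  funext k
  simp [hybrid]

theorem hybrid_of_le {m : ℕ} (hm : n ≤ m) : hybrid i j m = i := by
  funext k
  simp [hybrid, k.isLt.trans_le hm]

theorem hybrid_apply_of_lt {m : ℕ} {k : Fin n} (hk : (k : ℕ) < m) : hybrid i j m k = i k :=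
  if_pos hk

theorem hybrid_apply_of_le {m : ℕ} {k : Fin n} (hk : m ≤ (k : ℕ)) : hybrid i j m k = j k :=
  if_neg hk.not_gt

theorem hybrid_mem {s : Set α} (hi : ∀ k, i k ∈ s) (hj : ∀ k, j k ∈ s) (m : ℕ) (k : Fin n) :
    hybrid i j m k ∈ s := by
  unfold hybrid
  split_ifs
  exacts [hi k, hj k]

theorem update_hybrid (k : Fin n) :
    Function.update (hybrid i j k) k (i k) = hybrid i j (k + 1) := by
  funext l
  rcases eq_or_ne l k with rfl | hlk
  · simp [hybrid]
  · have hlk' : (l : ℕ) < k + 1 ↔ (l : ℕ) < k := by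
      have := Fin.val_ne_of_ne hlk
      omega
    simp only [Function.update_of_ne hlk, hybrid, hlk']

variable {i j}

theorem strictMono_hybrid [Preorder α] (hi : StrictMono i) (hj : StrictMono j) (hij : ∀ k, i k < j k)
    (m : ℕ) : StrictMono (hybrid i j m) := by
  intro k l hkl
  by_cases hl : (l : ℕ) < m
  · rw [hybrid_apply_of_lt i j hl, hybrid_apply_of_lt i j ((Fin.lt_def.mp hkl).trans hl)]
    exact hi hkl
  · rw [hybrid_apply_of_le i j (not_lt.mp hl)]
    unfold hybrid
    split_ifs
    exacts [(hij k).trans (hj hkl), hj hkl]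

theorem iff_of_hybrid_step {P : (Fin n → α) → Prop}
    (step : ∀ k : Fin n, P (hybrid i j k) ↔ P (hybrid i j (k + 1))) : P j ↔ P i := by
  suffices h : ∀ m ≤ n, P j ↔ P (hybrid i j m) by
    simpa only [hybrid_of_le i j le_rfl] using h n le_rfl
  intro m
  induction m with
  | zero => simp [hybrid_zero]
  | succ m ih =>
    intro hm
    exact (ih (Nat.le_of_succ_le hm)).trans (step ⟨m, hm⟩)

end Hybrid

/-- if `(i_k)_{k ≤ n}` and `(j_k)_{k ≤ n}` are strictly increasing
`(n+1)`-tuples from a class `A` with the one-step exchange property -- for any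
formula `φ`, parameter `β` below the tuple, and strictly increasing tuple `v`
from `A`, replacing the `k`-th coordinate `v k` by `x ∈ A` with
`v l < x` for `l < k` and `x < v k` preserves satisfaction -- then the tuples
`⟨i_0,…,i_n⟩` and `⟨j_0,…,j_n⟩` satisfy the same formulas with parameters below
`min (i_0, j_0)`.  (The chain of equivalences from Proposition 8.) -/
theorem exchange_tuples_satisfy_same (n : ℕ) (A : Set Ordinal)
    (Sat : ℕ → Ordinal → (Fin (n+1) → Ordinal) → Prop)
    (hex : ∀ (φ : ℕ) (β : Ordinal) (v : Fin (n+1) → Ordinal) (k : Fin (n+1))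
      (x : Ordinal), StrictMono v → (∀ l, v l ∈ A) → x ∈ A →
      β < v 0 → β < x → (∀ l, l < k → v l < x) → x < v k →
      (Sat φ β v ↔ Sat φ β (Function.update v k x)))
    (i j : Fin (n+1) → Ordinal)
    (hi : StrictMono i) (hj : StrictMono j)
    (hiA : ∀ k, i k ∈ A) (hjA : ∀ k, j k ∈ A)
    (hij : ∀ k, i k < j k) :
    ∀ (φ : ℕ) (β : Ordinal), β < i 0 → β < j 0 → (Sat φ β i ↔ Sat φ β j) := by
  intro φ β hβi hβj
  have hβi' : ∀ k, β < i k := fun k => hβi.trans_le (hi.monotone (Fin.zero_le k))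
  have hβj' : ∀ k, β < j k := fun k => hβj.trans_le (hj.monotone (Fin.zero_le k))
  refine (iff_of_hybrid_step fun k => ?_).symm
  rw [← update_hybrid]
  refine hex φ β _ k (i k) (strictMono_hybrid hi hj hij k) (hybrid_mem i j hiA hjA k) (hiA k)
    (hybrid_mem i j (s := Set.Ioi β) hβi' hβj' k 0) (hβi' k) (fun l hl => ?_) ?_
  · rw [hybrid_apply_of_lt i j (Fin.lt_def.mp hl)]
    exact hi hl
  · rw [hybrid_apply_of_le i j le_rfl]
    exact hij k
end

section
/- Let P be a partial order, ⊩ the forcing relation, and for each condition p and m ∈ ω let (p)_m be an operation with the properties: (p)_m ≥ p (i.e., p extends (p)_m), (p)_m is compatible with p, and ((q)_m for q ≤ (p)_{m+1}) is compatible with p. Suppose forcing satisfies: p ⊩ φ and q compatible with p implies q does not force ¬φ. If the induction hypothesis 'p ⊩ ψ implies (p)_m ⊩ ψ for all Π_m formulas ψ' holds, and p ⊩ φ for a Π_{m+1} formula φ = ∀x ψ with ψ Σ_m, then (p)_{m+1} ⊩ φ. -/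
def PCompat {P : Type*} [PartialOrder P] (p q : P) : Prop := ∃ r, r ≤ p ∧ r ≤ q

theorem PCompat.symm {P : Type*} [PartialOrder P] {p q : P} (h : PCompat p q) : PCompat q p :=
  let ⟨r, hrp, hrq⟩ := h
  ⟨r, hrq, hrp⟩

theorem restriction_forces_pi_succ_general {P Sent : Type*} [PartialOrder P]
    (Forces : P → Sent → Prop) (Pi : ℕ → Set Sent) (neg : Sent → Sent)
    (res : P → ℕ → P) (m : ℕ) (φ : Sent)
    -- for `q ≤ (p)_{m+1}`, `(q)_m` is compatible with `p`
    (hrescompat : ∀ p q : P, q ≤ res p (m+1) → PCompat (res q m) p)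
    -- density/truth: if `r` does not force `χ`, some extension forces `¬χ`
    (hdense : ∀ (r : P) (χ : Sent), ¬ Forces r χ → ∃ q, q ≤ r ∧ Forces q (neg χ))
    -- `Inst` is the set of `Π_m` instances `ψ(x̂)` witnessing `¬φ = ∃x ψ`
    (Inst : Set Sent) (hInstPi : Inst ⊆ Pi m)
    -- if `q` forces `¬φ` then some extension of `q` forces some instance
    (hinst : ∀ q : P, Forces q (neg φ) → ∃ r, r ≤ q ∧ ∃ χ ∈ Inst, Forces r χ)
    -- each instance implies `¬φ`: no condition forcing an instance is
    -- compatible with a condition forcing `φ`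
    (hcontra : ∀ (s t : P) (χ : Sent), χ ∈ Inst → Forces s φ → Forces t χ →
      ¬ PCompat s t)
    -- induction hypothesis: `p ⊩ ψ` implies `(p)_m ⊩ ψ` for `Π_m` formulas `ψ`
    (hIH : ∀ ψ ∈ Pi m, ∀ p : P, Forces p ψ → Forces (res p m) ψ)
    -- `φ` is `Π_{m+1}` and `p` forces `φ`
    (p : P) (hp : Forces p φ) :
    Forces (res p (m+1)) φ := by
  by_contra hnot
  obtain ⟨q, hq_le, hq_neg⟩ := hdense _ _ hnot
  obtain ⟨r, hr_le, χ, hχ, hr_forces⟩ := hinst q hq_neg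
  have hres_forces : Forces (res r m) χ := hIH χ (hInstPi hχ) r hr_forces
  have hcompat : PCompat p (res r m) := (hrescompat p r (hr_le.trans hq_le)).symm
  exact hcontra p (res r m) χ hχ hp hres_forces hcompat

/-- inductive step of the Claim in Lemma 5: abstract forcing
framework with a restriction operation `(·)_m`.  If `p` forces the `Π_{m+1}`
formula `φ = ∀x ψ` (`ψ` `Σ_m`), then `(p)_{m+1}` forces `φ`. -/
theorem restriction_forces_pi_succ {P Sent : Type*} [PartialOrder P]
    (Forces : P → Sent → Prop) (Pi : ℕ → Set Sent) (neg : Sent → Sent)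
    (res : P → ℕ → P) (m : ℕ) (φ : Sent)
    -- `p` extends `(p)_k` (hence `(p)_k` is compatible with `p`)
    (hres : ∀ (p : P) (k : ℕ), p ≤ res p k)
    -- for `q ≤ (p)_{m+1}`, `(q)_m` is compatible with `p`
    (hrescompat : ∀ p q : P, q ≤ res p (m+1) → PCompat (res q m) p)
    -- monotonicity of forcing
    (hmono : ∀ (p q : P) (χ : Sent), q ≤ p → Forces p χ → Forces q χ)
    -- if `p` forces `χ` then no condition compatible with `p` forces `¬χ`
    (hnegC : ∀ (p q : P) (χ : Sent), Forces p χ → PCompat p q → ¬ Forces q (neg χ))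
    -- density/truth: if `r` does not force `χ`, some extension forces `¬χ`
    (hdense : ∀ (r : P) (χ : Sent), ¬ Forces r χ → ∃ q, q ≤ r ∧ Forces q (neg χ))
    -- `Inst` is the set of `Π_m` instances `ψ(x̂)` witnessing `¬φ = ∃x ψ`
    (Inst : Set Sent) (hInstPi : Inst ⊆ Pi m)
    -- if `q` forces `¬φ` then some extension of `q` forces some instance
    (hinst : ∀ q : P, Forces q (neg φ) → ∃ r, r ≤ q ∧ ∃ χ ∈ Inst, Forces r χ)
    -- each instance implies `¬φ`: no condition forcing an instance is
    -- compatible with a condition forcing `φ`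
    (hcontra : ∀ (s t : P) (χ : Sent), χ ∈ Inst → Forces s φ → Forces t χ →
      ¬ PCompat s t)
    -- induction hypothesis: `p ⊩ ψ` implies `(p)_m ⊩ ψ` for `Π_m` formulas `ψ`
    (hIH : ∀ ψ ∈ Pi m, ∀ p : P, Forces p ψ → Forces (res p m) ψ)
    -- `φ` is `Π_{m+1}` and `p` forces `φ`
    (hφ : φ ∈ Pi (m+1)) (p : P) (hp : Forces p φ) :
    Forces (res p (m+1)) φ :=
  restriction_forces_pi_succ_general Forces Pi neg res m φ hrescompat hdense Inst hInstPi hinst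
    hcontra hIH p hp
end

section
/- Modified coding forcing: fix α regular, n(α) < ω, and a set A(α) ⊆ α. Define extension on Q(α)-conditions as before but additionally require: for p ≤ q, p(n(α))(2β+2) = 1 iff β ∈ A(α), for all 2β+2 ∈ [α(q), α(p)). Then for any sufficiently generic filter G (meeting the density sets D_β = {p : α(p) > β}), the set A(α) is definable from S_{n(α)} = ⋃{p(n(α)) : p ∈ G}: namely A(α) = {β : S_{n(α)}(2β+2) = 1} up to a bounded error determined by the first condition. -/
open Ordinal

/-- The modified (coding) extension relation: as before, but additionally for
`p ≤ q` we require `p(n(α))(2β+2) = 1` iff `β ∈ A(α)`, for all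
`2β+2 ∈ [α(q), α(p))`. -/
def QExtCode {α : Ordinal} (b : Ordinal → Set Ordinal) (nα : ℕ)
    (A : Set Ordinal) (p q : QCond α) : Prop :=
  QExt b p q ∧
  ∀ β : Ordinal, q.len ≤ 2*β + 2 → 2*β + 2 < p.len →
    (p.f nα (2*β + 2) = true ↔ β ∈ A)

/-! Any two conditions of a directed set `G` agree wherever both are defined, so
`S_{n(α)}` at `2β+2` is read off a single condition `r ∈ G` of length beyond `2β+2`.
Choosing `r` below `p₀` as well, the coding clause of `r ≤ p₀` says that this value
is `1` exactly when `β ∈ A(α)`. -/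

section

variable {α : Ordinal} {b : Ordinal → Set Ordinal}

theorem QExt.len_le {p q : QCond α} (h : QExt b p q) : q.len ≤ p.len := h.1

theorem QExt.f_eq {p q : QCond α} (h : QExt b p q) {n : ℕ} {δ : Ordinal}
    (hδ : δ < q.len) : p.f n δ = q.f n δ :=
  h.2.1 n δ hδ

namespace QCond

theorem f_eq_of_directed {G : Set (QCond α)}
    (hdir : ∀ p ∈ G, ∀ q ∈ G, ∃ r ∈ G, QExt b r p ∧ QExt b r q)
    {p q : QCond α} (hp : p ∈ G) (hq : q ∈ G) {n : ℕ} {δ : Ordinal}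
    (hδp : δ < p.len) (hδq : δ < q.len) : p.f n δ = q.f n δ := by
  obtain ⟨r, -, hrp, hrq⟩ := hdir p hp q hq
  rw [← hrp.f_eq hδp, hrq.f_eq hδq]

theorem union_apply_eq {G : Set (QCond α)}
    (hdir : ∀ p ∈ G, ∀ q ∈ G, ∃ r ∈ G, QExt b r p ∧ QExt b r q)
    {n : ℕ} {S : Ordinal → Bool}
    (hS : ∀ δ, S δ = true ↔ ∃ p ∈ G, δ < p.len ∧ p.f n δ = true)
    {p : QCond α} (hp : p ∈ G) {δ : Ordinal} (hδ : δ < p.len) : S δ = p.f n δ := by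
  rw [Bool.eq_iff_iff, hS]
  constructor
  · rintro ⟨q, hq, hδq, hqδ⟩
    rwa [f_eq_of_directed hdir hp hq hδ hδq]
  · exact fun hpδ => ⟨p, hp, hδ, hpδ⟩

end QCond

end

open QCond

theorem coding_forcing_defines_A_general (α : Ordinal) (b : Ordinal → Set Ordinal)
    (nα : ℕ) (A : Set Ordinal)
    (G : Set (QCond α))
    -- `G` is a filter: downward directed and upward closed
    (hdir : ∀ p ∈ G, ∀ q ∈ G, ∃ r ∈ G, QExtCode b nα A r p ∧ QExtCode b nα A r q)
    -- `G` meets every dense set `D_β`, `β < α`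
    (hgen : ∀ β < α, ∃ p ∈ G, β < p.len)
    -- `S` is `S_{n(α)}`, the union of the `p(n(α))` for `p ∈ G`
    (S : Ordinal → Bool)
    (hS : ∀ δ, S δ = true ↔ ∃ p ∈ G, δ < p.len ∧ p.f nα δ = true) :
    ∀ p₀ ∈ G, ∀ β : Ordinal, p₀.len ≤ 2*β + 2 → 2*β + 2 < α →
      (β ∈ A ↔ S (2*β + 2) = true) := by
  intro p₀ hp₀ β hβp₀ hβα
  have hdir' : ∀ p ∈ G, ∀ q ∈ G, ∃ r ∈ G, QExt b r p ∧ QExt b r q := fun p hp q hq =>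
    (hdir p hp q hq).imp fun _ ⟨hr, hrp, hrq⟩ => ⟨hr, hrp.1, hrq.1⟩
  obtain ⟨p, hp, hβp⟩ := hgen (2*β + 2) hβα
  obtain ⟨r, hr, hrp, hrp₀⟩ := hdir p hp p₀ hp₀
  have hβr : 2*β + 2 < r.len := hβp.trans_le hrp.1.len_le
  rw [union_apply_eq hdir' hS hr hβr]
  exact (hrp₀.2 β hβp₀ hβr).symm

/-- in the modified coding forcing with parameters `n(α) < ω` and
`A(α) ⊆ α`, for any filter `G` meeting the dense sets `D_β = {p : α(p) > β}`,
the set `A(α)` is definable from `S_{n(α)} = ⋃ {p(n(α)) : p ∈ G}` up to a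
bounded error: for any `p₀ ∈ G` and all `β` with `2β+2 ≥ α(p₀)` and
`2β+2 < α`, `β ∈ A(α)` iff `S_{n(α)}(2β+2) = 1`. -/
theorem coding_forcing_defines_A (α : Ordinal) (b : Ordinal → Set Ordinal)
    (nα : ℕ) (A : Set Ordinal) (hA : A ⊆ Set.Iio α)
    (G : Set (QCond α))
    -- `G` is a filter: downward directed and upward closed
    (hdir : ∀ p ∈ G, ∀ q ∈ G, ∃ r ∈ G, QExtCode b nα A r p ∧ QExtCode b nα A r q)
    (hup : ∀ p ∈ G, ∀ q, QExtCode b nα A p q → q ∈ G)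
    -- `G` meets every dense set `D_β`, `β < α`
    (hgen : ∀ β < α, ∃ p ∈ G, β < p.len)
    -- `S` is `S_{n(α)}`, the union of the `p(n(α))` for `p ∈ G`
    (S : Ordinal → Bool)
    (hS : ∀ δ, S δ = true ↔ ∃ p ∈ G, δ < p.len ∧ p.f nα δ = true) :
    ∀ p₀ ∈ G, ∀ β : Ordinal, p₀.len ≤ 2*β + 2 → 2*β + 2 < α →
      (β ∈ A ↔ S (2*β + 2) = true) :=
  coding_forcing_defines_A_general α b nα A G hdir hgen S hS
end
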